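/- arXiv:2502.02680 — 6 statements merged into one kernel-verified Lean document; each statement's English description precedes it below -/
import Mathlib

section
/- The function c defined by c(0) = 0 and c(i) = min over 0 ≤ j < i of (max(c(j), r_i) + 2τ_{j+1}) is non-decreasing: for all i with 1 ≤ i ≤ n-1, c(i) ≤ c(i+1). -/
open Finset

theorem Finset.inf'_range_le_inf'_range_succ {α : Type*} [SemilatticeInf α] {f g : ℕ → α} {i : ℕ}
    (hi : (range i).Nonempty) (hfg : ∀ j < i, f j ≤ g j) (hlast : (range i).inf' hi f ≤ g i) :
    (range i).inf' hi f ≤ (range (i + 1)).inf' nonempty_range_add_one g := by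
  refine le_inf' _ _ fun j hj => ?_
  rcases Nat.lt_succ_iff_lt_or_eq.mp (mem_range.mp hj) with hji | rfl
  · exact (inf'_le f (mem_range.mpr hji)).trans (hfg j hji)
  · exact hlast

theorem stmt_0_general (n : ℕ) (r τ c : ℕ → ℝ)
    (hrmono : ∀ i, 1 ≤ i → i ≤ n → r i ≤ r (i + 1))
    (hτ0 : ∀ j, 0 ≤ τ j)
    (hc : ∀ i, ∀ hi : 1 ≤ i,
      c i = (Finset.range i).inf'
        (Finset.nonempty_range_iff.mpr (Nat.one_le_iff_ne_zero.mp hi))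
        (fun j => max (c j) (r i) + 2 * τ (j + 1))) :
    ∀ i, 1 ≤ i → i ≤ n - 1 → c i ≤ c (i + 1) := by
  intro i hi hin
  have hr : r i ≤ r (i + 1) := hrmono i hi (by omega)
  rw [hc (i + 1) (by omega), hc i hi]
  refine inf'_range_le_inf'_range_succ _ (fun j _ => by gcongr) ?_
  rw [← hc i hi]
  linarith [le_max_left (c i) (r (i + 1)), hτ0 (i + 1)]

/-- the completion-time recurrence `c` is non-decreasing. -/
theorem stmt_0 (n : ℕ) (hn : 1 ≤ n) (r τ c : ℕ → ℝ)
    (hr0 : ∀ i, 0 ≤ r i)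
    (hrmono : ∀ i, 1 ≤ i → i ≤ n → r i ≤ r (i + 1))
    (hτ0 : ∀ j, 0 ≤ τ j)
    (hτmono : ∀ j, 1 ≤ j → j ≤ n → τ (j + 1) ≤ τ j)
    (hc0 : c 0 = 0)
    (hc : ∀ i, ∀ hi : 1 ≤ i,
      c i = (Finset.range i).inf'
        (Finset.nonempty_range_iff.mpr (Nat.one_le_iff_ne_zero.mp hi))
        (fun j => max (c j) (r i) + 2 * τ (j + 1))) :
    ∀ i, 1 ≤ i → i ≤ n - 1 → c i ≤ c (i + 1) :=
  stmt_0_general n r τ c hrmono hτ0 hc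
end

section
/- The recurrence c(i) = min_{0 ≤ j < i}(max(c(j), r_i) + 2τ_{j+1}) equals min( r_i + 2τ_{k+1}, min_{k < j < i}(c(j) + 2τ_{j+1}) ), where k = max{ j : 0 ≤ j < i, c(j) ≤ r_i }, provided such k exists; if no j < i satisfies c(j) ≤ r_i, then c(i) = min_{0 ≤ j < i}(c(j) + 2τ_{j+1}). -/
/-!
Split the indices `j < i` at `k`. For `j ≤ k` every term `max (c j) rᵢ + 2τ_{j+1}` is at least
`rᵢ + 2τ_{k+1}` because `τ` is non-increasing, and `j = k` attains this value. For `k < j < i`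
the maximality of `k` forces `rᵢ < c j`, so the maximum is `c j`.
-/

open Finset

section SplitMin

variable {a t : ℕ → ℝ} {R : ℝ} {k n : ℕ}

lemma inf_Iic_max_add_eq (ht : Antitone t) (hk : a k ≤ R) :
    (Iic k).inf (fun j => ((max (a j) R + t j : ℝ) : EReal)) = ((R + t k : ℝ) : EReal) := by
  refine le_antisymm ?_ (Finset.le_inf ?_)
  · calc (Iic k).inf (fun j => ((max (a j) R + t j : ℝ) : EReal))
        _ ≤ ((max (a k) R + t k : ℝ) : EReal) := inf_le (mem_Iic.mpr le_rfl)
        _ = ((R + t k : ℝ) : EReal) := by rw [max_eq_right hk]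
  · intro j hj
    have : R + t k ≤ max (a j) R + t j :=
      add_le_add (le_max_right _ _) (ht (mem_Iic.mp hj))
    exact_mod_cast this

lemma inf_Ioo_max_add_eq (hmax : ∀ j < n, a j ≤ R → j ≤ k) :
    (Ioo k n).inf (fun j => ((max (a j) R + t j : ℝ) : EReal)) =
      (Ioo k n).inf (fun j => ((a j + t j : ℝ) : EReal)) := by
  refine inf_congr rfl fun j hj => ?_
  obtain ⟨hkj, hjn⟩ := mem_Ioo.mp hj
  have hRa : R < a j := lt_of_not_ge fun h => (hmax j hjn h).not_gt hkj
  rw [max_eq_left hRa.le]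

theorem coe_inf'_max_add_eq_min (ht : Antitone t) (hkn : k < n) (hk : a k ≤ R)
    (hmax : ∀ j < n, a j ≤ R → j ≤ k) (hn : (range n).Nonempty) :
    (((range n).inf' hn fun j => max (a j) R + t j : ℝ) : EReal) =
      min ((R + t k : ℝ) : EReal) ((Ioo k n).inf fun j => ((a j + t j : ℝ) : EReal)) := by
  have hsplit : range n = Iic k ∪ Ioo k n := by
    ext j
    simp only [mem_range, mem_union, mem_Iic, mem_Ioo]
    omega
  rw [apply_inf'_eq_inf'_comp hn _ fun _ _ => EReal.coe_strictMono.monotone.map_min, inf'_eq_inf,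
    hsplit, inf_union]
  exact congr_arg₂ min (inf_Iic_max_add_eq ht hk) (inf_Ioo_max_add_eq hmax)

end SplitMin

theorem stmt_2_general (r τ c : ℕ → ℝ)
    (hτmono : ∀ j, τ (j + 1) ≤ τ j)
    (hc : ∀ i, ∀ hi : 1 ≤ i,
      c i = (Finset.range i).inf'
        (Finset.nonempty_range_iff.mpr (Nat.one_le_iff_ne_zero.mp hi))
        (fun j => max (c j) (r i) + 2 * τ (j + 1)))
    (i : ℕ) (hi : 1 ≤ i) :
    (∀ k, k < i → c k ≤ r i → (∀ j, j < i → c j ≤ r i → j ≤ k) →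
      (c i : EReal) =
        min ((r i + 2 * τ (k + 1) : ℝ) : EReal)
          ((Finset.Ioo k i).inf (fun j => ((c j + 2 * τ (j + 1) : ℝ) : EReal)))) ∧
    ((∀ j, j < i → r i < c j) →
      c i = (Finset.range i).inf'
        (Finset.nonempty_range_iff.mpr (Nat.one_le_iff_ne_zero.mp hi))
        (fun j => c j + 2 * τ (j + 1))) := by
  have hτ : Antitone fun j => 2 * τ (j + 1) := fun j l hjl => by
    have := antitone_nat_of_succ_le hτmono (Nat.succ_le_succ hjl)
    linarith
  refine ⟨fun k hki hk hmax => ?_, fun hall => ?_⟩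
  · rw [hc i hi]
    exact coe_inf'_max_add_eq_min hτ hki hk hmax _
  · rw [hc i hi]
    exact inf'_congr _ rfl fun j hj => by rw [max_eq_left (hall j (mem_range.mp hj)).le]

/-- splitting of the completion-time recurrence at
`k = max {j < i : c j ≤ rᵢ}` (when it exists; the inner minimum over the
possibly empty set `{j : k < j < i}` is taken in `EReal`, empty = `⊤`),
and the case where no `j < i` satisfies `c j ≤ rᵢ`. -/
theorem stmt_2 (r τ c : ℕ → ℝ)
    (hrmono : ∀ i, r i ≤ r (i + 1))
    (hτmono : ∀ j, τ (j + 1) ≤ τ j)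
    (hc0 : c 0 = 0)
    (hc : ∀ i, ∀ hi : 1 ≤ i,
      c i = (Finset.range i).inf'
        (Finset.nonempty_range_iff.mpr (Nat.one_le_iff_ne_zero.mp hi))
        (fun j => max (c j) (r i) + 2 * τ (j + 1)))
    (i : ℕ) (hi : 1 ≤ i) :
    (∀ k, k < i → c k ≤ r i → (∀ j, j < i → c j ≤ r i → j ≤ k) →
      (c i : EReal) =
        min ((r i + 2 * τ (k + 1) : ℝ) : EReal)
          ((Finset.Ioo k i).inf (fun j => ((c j + 2 * τ (j + 1) : ℝ) : EReal)))) ∧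
    ((∀ j, j < i → r i < c j) →
      c i = (Finset.range i).inf'
        (Finset.nonempty_range_iff.mpr (Nat.one_le_iff_ne_zero.mp hi))
        (fun j => c j + 2 * τ (j + 1))) :=
  stmt_2_general r τ c hτmono hc i hi
end

section
/- For the two-sided completion-time recurrence c(i,j) = min(L(i,j), R(i,j)) with c(0,0) = 0, the function c is non-decreasing in each coordinate: c(i,j) ≤ c(i+1,j) and c(i,j) ≤ c(i,j+1) for all valid i,j. -/
/-!
Strong induction on the other coordinate. A left move into `(i + 1, j)` either starts from
some `(w, j)` with `w < i`, and then costs at least the same move into `(i, j)` because `r^l`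
is non-decreasing, or it starts from `(i, j)` itself and costs at least `c(i, j)` because
`τ^l ≥ 0`. A right move into `(i + 1, j)` from `(i + 1, w)` with `w < j` costs at least the
right move into `(i, j)` from `(i, w)`, by the induction hypothesis `c(i, w) ≤ c(i + 1, w)`.
Monotonicity in `j` follows by transposing the grid.
-/

open Function Set

/-- The cost of the left move from `(w, j)` to `(i, j)`; the right move from `(i, w)` to `(i, j)`
is `stepCost rr τr (swap c) j i w`. -/
def stepCost (r τ : ℕ → ℝ) (c : ℕ → ℕ → ℝ) (i j w : ℕ) : ℝ :=
  max (c w j) (r i) + 2 * τ (w + 1)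

/-- `c(i, j) = min (L(i, j), R(i, j))` read in `ℝ`: an empty `L` or `R` (the value `⊤`) contributes
no moves to the union. -/
def SolvesRecurrence (rl rr τl τr : ℕ → ℝ) (c : ℕ → ℕ → ℝ) : Prop :=
  ∀ i j, (i, j) ≠ (0, 0) →
    IsGLB (stepCost rl τl c i j '' Iio i ∪ stepCost rr τr (swap c) j i '' Iio j) (c i j)

theorem coe_le_iff_mem_lowerBounds_image {n : ℕ} {f : ℕ → ℝ} {l : EReal} (h0 : n = 0 → l = ⊤)
    (h : ∀ hn : 1 ≤ n, l = (((Finset.range n).inf'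
      (Finset.nonempty_range_iff.mpr (Nat.one_le_iff_ne_zero.mp hn)) f : ℝ) : EReal)) (b : ℝ) :
    (b : EReal) ≤ l ↔ b ∈ lowerBounds (f '' Iio n) := by
  rcases Nat.eq_zero_or_pos n with rfl | hn
  · simp [h0 rfl]
  · rw [h hn, EReal.coe_le_coe_iff, Finset.le_inf'_iff, mem_lowerBounds, forall_mem_image]
    simp only [Finset.mem_range, mem_Iio]

theorem solvesRecurrence_of_eq_min {rl rr τl τr : ℕ → ℝ} {c : ℕ → ℕ → ℝ} {L R : ℕ → ℕ → EReal}
    (hL0 : ∀ j, L 0 j = ⊤) (hR0 : ∀ i, R i 0 = ⊤)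
    (hL : ∀ i j, ∀ hi : 1 ≤ i,
      L i j = (((Finset.range i).inf'
        (Finset.nonempty_range_iff.mpr (Nat.one_le_iff_ne_zero.mp hi))
        (fun w => max (c w j) (rl i) + 2 * τl (w + 1)) : ℝ) : EReal))
    (hR : ∀ i j, ∀ hj : 1 ≤ j,
      R i j = (((Finset.range j).inf'
        (Finset.nonempty_range_iff.mpr (Nat.one_le_iff_ne_zero.mp hj))
        (fun w => max (c i w) (rr j) + 2 * τr (w + 1)) : ℝ) : EReal))
    (hc : ∀ i j, (i, j) ≠ (0, 0) → (c i j : EReal) = min (L i j) (R i j)) :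
    SolvesRecurrence rl rr τl τr c := by
  intro i j hij
  refine isGLB_iff_le_iff.2 fun b => ?_
  rw [lowerBounds_union, ← EReal.coe_le_coe_iff, hc i j hij, le_min_iff]
  exact and_congr
    (coe_le_iff_mem_lowerBounds_image (by rintro rfl; exact hL0 j) (hL i j) b)
    (coe_le_iff_mem_lowerBounds_image (by rintro rfl; exact hR0 i) (hR i j) b)

namespace SolvesRecurrence

variable {rl rr τl τr : ℕ → ℝ} {c : ℕ → ℕ → ℝ}

theorem swap (h : SolvesRecurrence rl rr τl τr c) : SolvesRecurrence rr rl τr τl (swap c) :=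
  fun i j hij => by
    rw [union_comm]
    exact h j i (by simpa [and_comm] using hij)

theorem le_succ_left (h : SolvesRecurrence rl rr τl τr c) (hrl : Monotone rl)
    (hτl : ∀ w, 0 ≤ τl w) (i j : ℕ) : c i j ≤ c (i + 1) j := by
  induction j using Nat.strong_induction_on generalizing i with
  | _ j ih =>
    refine (h (i + 1) j (by simp)).2 ?_
    rintro _ (⟨w, hw, rfl⟩ | ⟨w, hw, rfl⟩)
    · rcases Nat.lt_succ_iff_lt_or_eq.mp hw with hw | rfl
      · calc c i j ≤ stepCost rl τl c i j w :=
              (h i j (by simp; omega)).1 (mem_union_left _ ⟨w, hw, rfl⟩)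
          _ ≤ stepCost rl τl c (i + 1) j w := by
              unfold stepCost; gcongr; exact hrl (Nat.le_succ i)
      · unfold stepCost
        linarith [le_max_left (c w j) (rl (w + 1)), hτl (w + 1)]
    · calc c i j ≤ stepCost rr τr (Function.swap c) j i w :=
            (h i j (by have := mem_Iio.mp hw; simp; omega)).1 (mem_union_right _ ⟨w, hw, rfl⟩)
        _ ≤ stepCost rr τr (Function.swap c) j (i + 1) w := by
            unfold stepCost Function.swap; gcongr; exact ih w hw i

theorem le_succ_right (h : SolvesRecurrence rl rr τl τr c) (hrr : Monotone rr)
    (hτr : ∀ w, 0 ≤ τr w) (i j : ℕ) : c i j ≤ c i (j + 1) :=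
  h.swap.le_succ_left hrr hτr j i

end SolvesRecurrence

theorem stmt_10_general (nl nr : ℕ)
    (rl rr τl τr : ℕ → ℝ) (c : ℕ → ℕ → ℝ) (L R : ℕ → ℕ → EReal)
    (hrlmono : ∀ i, rl i ≤ rl (i + 1)) (hrrmono : ∀ i, rr i ≤ rr (i + 1))
    (hτl0 : ∀ j, 0 ≤ τl j) (hτr0 : ∀ j, 0 ≤ τr j)
    (hL0 : ∀ j, L 0 j = ⊤) (hR0 : ∀ i, R i 0 = ⊤)
    (hL : ∀ i j, ∀ hi : 1 ≤ i,
      L i j = (((Finset.range i).inf'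
        (Finset.nonempty_range_iff.mpr (Nat.one_le_iff_ne_zero.mp hi))
        (fun w => max (c w j) (rl i) + 2 * τl (w + 1)) : ℝ) : EReal))
    (hR : ∀ i j, ∀ hj : 1 ≤ j,
      R i j = (((Finset.range j).inf'
        (Finset.nonempty_range_iff.mpr (Nat.one_le_iff_ne_zero.mp hj))
        (fun w => max (c i w) (rr j) + 2 * τr (w + 1)) : ℝ) : EReal))
    (hc : ∀ i j, (i, j) ≠ (0, 0) → (c i j : EReal) = min (L i j) (R i j)) :
    (∀ i j, i + 1 ≤ nl → j ≤ nr → c i j ≤ c (i + 1) j) ∧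
    (∀ i j, i ≤ nl → j + 1 ≤ nr → c i j ≤ c i (j + 1)) := by
  have hrec : SolvesRecurrence rl rr τl τr c := solvesRecurrence_of_eq_min hL0 hR0 hL hR hc
  exact ⟨fun i j _ _ => hrec.le_succ_left (monotone_nat_of_le_succ hrlmono) hτl0 i j,
    fun i j _ _ => hrec.le_succ_right (monotone_nat_of_le_succ hrrmono) hτr0 i j⟩

/-- the two-sided completion-time recurrence
`c(i,j) = min (L(i,j), R(i,j))`, `c(0,0) = 0` (with `L(0,·) = R(·,0) = ⊤` in
`EReal`), is non-decreasing in each coordinate. -/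
theorem stmt_10 (nl nr : ℕ) (hnl : 1 ≤ nl) (hnr : 1 ≤ nr)
    (rl rr τl τr : ℕ → ℝ) (c : ℕ → ℕ → ℝ) (L R : ℕ → ℕ → EReal)
    (hrl0 : ∀ i, 0 ≤ rl i) (hrr0 : ∀ i, 0 ≤ rr i)
    (hrlmono : ∀ i, rl i ≤ rl (i + 1)) (hrrmono : ∀ i, rr i ≤ rr (i + 1))
    (hτl0 : ∀ j, 0 ≤ τl j) (hτr0 : ∀ j, 0 ≤ τr j)
    (hτlmono : ∀ j, τl (j + 1) ≤ τl j) (hτrmono : ∀ j, τr (j + 1) ≤ τr j)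
    (hL0 : ∀ j, L 0 j = ⊤) (hR0 : ∀ i, R i 0 = ⊤)
    (hL : ∀ i j, ∀ hi : 1 ≤ i,
      L i j = (((Finset.range i).inf'
        (Finset.nonempty_range_iff.mpr (Nat.one_le_iff_ne_zero.mp hi))
        (fun w => max (c w j) (rl i) + 2 * τl (w + 1)) : ℝ) : EReal))
    (hR : ∀ i j, ∀ hj : 1 ≤ j,
      R i j = (((Finset.range j).inf'
        (Finset.nonempty_range_iff.mpr (Nat.one_le_iff_ne_zero.mp hj))
        (fun w => max (c i w) (rr j) + 2 * τr (w + 1)) : ℝ) : EReal))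
    (hc00 : c 0 0 = 0)
    (hc : ∀ i j, (i, j) ≠ (0, 0) → (c i j : EReal) = min (L i j) (R i j)) :
    (∀ i j, i + 1 ≤ nl → j ≤ nr → c i j ≤ c (i + 1) j) ∧
    (∀ i j, i ≤ nl → j + 1 ≤ nr → c i j ≤ c i (j + 1)) :=
  stmt_10_general nl nr rl rr τl τr c L R hrlmono hrrmono hτl0 hτr0 hL0 hR0 hL hR hc
end

section
/- In the two-sided recurrence, the left-side term satisfies L(i,j) = min( r_i^l + 2τ^l_{k+1}, min_{k < w < i}(c(w,j) + 2τ^l_{w+1}) ) where k = max{ w < i : c(w,j) ≤ r_i^l }, provided such k exists. -/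
/-!
Split `range i` at `k`. For `w ≤ k` every term is at least `rᵢˡ + 2τˡ_{k+1}`, since the max is
at least `rᵢˡ` and `τˡ` is non-increasing, and `w = k` attains this because `c(k,j) ≤ rᵢˡ`.
For `k < w < i` the maximality of `k` forces `rᵢˡ < c(w,j)`, so the max is `c(w,j)`.
-/

theorem EReal.coe_finset_inf' {ι : Type*} {s : Finset ι} (hs : s.Nonempty) (f : ι → ℝ) :
    ((s.inf' hs f : ℝ) : EReal) = s.inf fun i => (f i : EReal) := by
  rw [Finset.apply_inf'_eq_inf'_comp hs _ fun _ _ => EReal.coe_strictMono.monotone.map_min,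
    Finset.inf'_eq_inf]
  rfl

theorem Finset.range_eq_range_add_one_union_Ioo {k i : ℕ} (hki : k < i) :
    range i = range (k + 1) ∪ Ioo k i := by
  ext w
  simp only [mem_range, mem_union, mem_Ioo]
  omega

section LeftTerm

variable {a b : ℕ → ℝ} {r : ℝ} {k : ℕ}

theorem inf_range_max_add_eq (hb : Antitone b) (hak : a k ≤ r) :
    (Finset.range (k + 1)).inf (fun w => ((max (a w) r + b w : ℝ) : EReal)) =
      ((r + b k : ℝ) : EReal) := by
  refine le_antisymm ?_ (Finset.le_inf fun w hw => EReal.coe_le_coe_iff.mpr ?_)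
  · exact (Finset.inf_le (Finset.self_mem_range_succ k)).trans_eq (by rw [max_eq_right hak])
  · have hbw : b k ≤ b w := hb (Finset.mem_range_succ_iff.mp hw)
    linarith [le_max_right (a w) r]

theorem inf_Ioo_max_add_eq_s11 {i : ℕ} (hkmax : ∀ w, w < i → a w ≤ r → w ≤ k) :
    (Finset.Ioo k i).inf (fun w => ((max (a w) r + b w : ℝ) : EReal)) =
      (Finset.Ioo k i).inf (fun w => ((a w + b w : ℝ) : EReal)) := by
  refine Finset.inf_congr rfl fun w hw => ?_
  obtain ⟨hkw, hwi⟩ := Finset.mem_Ioo.mp hw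
  have hrw : r ≤ a w := le_of_not_ge fun h => (hkmax w hwi h).not_gt hkw
  rw [max_eq_left hrw]

end LeftTerm

theorem stmt_11_general (rl τl : ℕ → ℝ) (c : ℕ → ℕ → ℝ)
    (hτlmono : ∀ w, τl (w + 1) ≤ τl w)
    (i j k : ℕ) (hi : 1 ≤ i)
    (hki : k < i) (hck : c k j ≤ rl i)
    (hkmax : ∀ w, w < i → c w j ≤ rl i → w ≤ k) :
    (((Finset.range i).inf'
        (Finset.nonempty_range_iff.mpr (Nat.one_le_iff_ne_zero.mp hi))
        (fun w => max (c w j) (rl i) + 2 * τl (w + 1)) : ℝ) : EReal) =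
      min ((rl i + 2 * τl (k + 1) : ℝ) : EReal)
        ((Finset.Ioo k i).inf (fun w => ((c w j + 2 * τl (w + 1) : ℝ) : EReal))) := by
  have hτ : Antitone fun w => 2 * τl (w + 1) := fun u v huv => by
    have := antitone_nat_of_succ_le hτlmono (Nat.succ_le_succ huv)
    linarith
  rw [EReal.coe_finset_inf', Finset.range_eq_range_add_one_union_Ioo hki, Finset.inf_union,
    inf_range_max_add_eq (a := (c · j)) (b := fun w => 2 * τl (w + 1)) hτ hck,
    inf_Ioo_max_add_eq_s11 hkmax]

/-- splitting of the left-side term `L(i,j)` at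
`k = max {w < i : c(w,j) ≤ rᵢˡ}` (inner minimum over the possibly empty set
`{w : k < w < i}` taken in `EReal`, empty = `⊤`). -/
theorem stmt_11 (rl τl : ℕ → ℝ) (c : ℕ → ℕ → ℝ)
    (hrlmono : ∀ i, rl i ≤ rl (i + 1))
    (hτlmono : ∀ w, τl (w + 1) ≤ τl w)
    (hcmono : ∀ j a b, a ≤ b → c a j ≤ c b j)
    (i j k : ℕ) (hi : 1 ≤ i)
    (hki : k < i) (hck : c k j ≤ rl i)
    (hkmax : ∀ w, w < i → c w j ≤ rl i → w ≤ k) :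
    (((Finset.range i).inf'
        (Finset.nonempty_range_iff.mpr (Nat.one_le_iff_ne_zero.mp hi))
        (fun w => max (c w j) (rl i) + 2 * τl (w + 1)) : ℝ) : EReal) =
      min ((rl i + 2 * τl (k + 1) : ℝ) : EReal)
        ((Finset.Ioo k i).inf (fun w => ((c w j + 2 * τl (w + 1) : ℝ) : EReal))) :=
  stmt_11_general rl τl c hτlmono i j k hi hki hck hkmax
end

section
/- The distance recurrence λ is non-decreasing in i: if τ is non-increasing and nonnegative and all feasible sets are nonempty, then λ(i) ≤ λ(i+1) for all 1 ≤ i ≤ n. -/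
/-! If the maximum defining `λ i` is attained at `j = i + 1`, then `λ i = λ (i+1) - 2τ_i ≤ λ (i+1)`.
Otherwise `j > i + 1`, and since `τ` is non-increasing the constraint `r_{j-1} ≤ λ j - 2τ_i` implies
`r_{j-1} ≤ λ j - 2τ_{i+1}`, so `j` is also feasible for `i + 1`; hence
`λ i = λ j - 2τ_i ≤ λ j - 2τ_{i+1} ≤ λ (i+1)`. -/

namespace DistanceRecurrence

variable (n : ℕ) (r τ lam : ℕ → ℝ)

noncomputable def feasibleSet (i : ℕ) : Finset ℕ :=
  (Finset.Ioc i (n + 1)).filter (fun j => r (j - 1) ≤ lam j - 2 * τ i)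

variable {n r τ lam}

lemma mem_feasibleSet_succ {i j : ℕ} (hτ : τ (i + 1) ≤ τ i)
    (hj : j ∈ feasibleSet n r τ lam i) (hij : i + 1 < j) :
    j ∈ feasibleSet n r τ lam (i + 1) := by
  simp only [feasibleSet, Finset.mem_filter, Finset.mem_Ioc] at hj ⊢
  exact ⟨⟨hij, hj.1.2⟩, by linarith [hj.2]⟩

lemma le_of_mem_feasibleSet {i j : ℕ} (hne : (feasibleSet n r τ lam i).Nonempty)
    (hrec : lam i = (feasibleSet n r τ lam i).sup' hne (fun j => lam j - 2 * τ i))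
    (hj : j ∈ feasibleSet n r τ lam i) :
    lam j - 2 * τ i ≤ lam i :=
  hrec ▸ Finset.le_sup' (fun j => lam j - 2 * τ i) hj

lemma exists_mem_feasibleSet_eq {i : ℕ} (hne : (feasibleSet n r τ lam i).Nonempty)
    (hrec : lam i = (feasibleSet n r τ lam i).sup' hne (fun j => lam j - 2 * τ i)) :
    ∃ j ∈ feasibleSet n r τ lam i, lam i = lam j - 2 * τ i := by
  obtain ⟨j, hj, hmax⟩ := Finset.exists_mem_eq_sup' hne (fun j => lam j - 2 * τ i)
  exact ⟨j, hj, hrec.trans hmax⟩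

end DistanceRecurrence

open DistanceRecurrence in
theorem stmt_12_general (n : ℕ) (r τ lam : ℕ → ℝ)
    (hτmono : ∀ i, τ (i + 1) ≤ τ i)
    (hτ0 : ∀ i, 0 ≤ τ i)
    (hne : ∀ i, 1 ≤ i → i ≤ n →
      ((Finset.Ioc i (n + 1)).filter
        (fun j => r (j - 1) ≤ lam j - 2 * τ i)).Nonempty)
    (hrec : ∀ i, ∀ h1 : 1 ≤ i, ∀ h2 : i ≤ n,
      lam i = ((Finset.Ioc i (n + 1)).filter
        (fun j => r (j - 1) ≤ lam j - 2 * τ i)).sup' (hne i h1 h2)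
          (fun j => lam j - 2 * τ i)) :
    ∀ i, 1 ≤ i → i ≤ n → lam i ≤ lam (i + 1) := by
  intro i h1 h2
  obtain ⟨j, hj, hlam⟩ := exists_mem_feasibleSet_eq (hne i h1 h2) (hrec i h1 h2)
  obtain ⟨hij, hjn⟩ := Finset.mem_Ioc.mp (Finset.mem_filter.mp hj).1
  rcases (Nat.succ_le_of_lt hij).eq_or_lt with rfl | hlt
  · linarith [hτ0 i]
  · have hi : i + 1 ≤ n := by omega
    have hsucc : lam j - 2 * τ (i + 1) ≤ lam (i + 1) :=
      le_of_mem_feasibleSet (hne (i + 1) (by omega) hi) (hrec (i + 1) (by omega) hi)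
        (mem_feasibleSet_succ (hτmono i) hj hlt)
    linarith [hτmono i]

/-- the distance recurrence `λ` is non-decreasing in `i`. -/
theorem stmt_12 (n : ℕ) (hn : 1 ≤ n) (D : ℝ) (r τ lam : ℕ → ℝ)
    (hτmono : ∀ i, τ (i + 1) ≤ τ i)
    (hτ0 : ∀ i, 0 ≤ τ i)
    (hbase : lam (n + 1) = D)
    (hne : ∀ i, 1 ≤ i → i ≤ n →
      ((Finset.Ioc i (n + 1)).filter
        (fun j => r (j - 1) ≤ lam j - 2 * τ i)).Nonempty)
    (hrec : ∀ i, ∀ h1 : 1 ≤ i, ∀ h2 : i ≤ n,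
      lam i = ((Finset.Ioc i (n + 1)).filter
        (fun j => r (j - 1) ≤ lam j - 2 * τ i)).sup' (hne i h1 h2)
          (fun j => lam j - 2 * τ i)) :
    ∀ i, 1 ≤ i → i ≤ n → lam i ≤ lam (i + 1) :=
  stmt_12_general n r τ lam hτmono hτ0 hne hrec
end

section
/- In the two-sided distance recurrence with depot anywhere on the path, λ(i,j) ≤ λ(i+1,j) and λ(i,j) ≤ λ(i,j+1) whenever all feasible sets involved are nonempty and τ^l, τ^r are non-increasing and nonnegative. -/
/-! Fix `i` and induct downwards on `j`. In `λ(i,j) = max (L(i,j), R(i,j))`, every left step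
from `i` either lands on `i+1`, giving at most `λ(i+1,j)` since `τ^l ≥ 0`, or jumps further and
is then also a feasible left step from `i+1` with a penalty `2τ^l_{i+1} ≤ 2τ^l_i`; so
`L(i,j) ≤ max (λ(i+1,j), L(i+1,j)) ≤ λ(i+1,j)`. Every right step from `(i,j)` lands on a column
`w > j`, where `λ(i,w) ≤ λ(i+1,w)` by induction, so it stays feasible from `(i+1,j)` and
`R(i,j) ≤ R(i+1,j)`. The second claim is the first one for the transposed recurrence. -/

open Finset

/-- The one-axis term `L(i,j)` (with `f = λ(·,j)`) or `R(i,j)` (with `f = λ(i,·)`) of the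
recurrence; it is `⊥` when no step is feasible. -/
noncomputable def feasibleSup (n : ℕ) (r τ f : ℕ → ℝ) (i : ℕ) : EReal :=
  ((Ioc i (n + 1)).filter (fun w => r (w - 1) ≤ f w - 2 * τ i)).sup
    (fun w => ((f w - 2 * τ i : ℝ) : EReal))

lemma feasibleSup_mono {n : ℕ} {r τ f g : ℕ → ℝ} {i : ℕ}
    (hfg : ∀ w, i < w → w ≤ n + 1 → f w ≤ g w) :
    feasibleSup n r τ f i ≤ feasibleSup n r τ g i := by
  refine Finset.sup_le fun w hw => ?_
  simp only [mem_filter, mem_Ioc] at hw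
  obtain ⟨⟨hiw, hwn⟩, hfeas⟩ := hw
  have hle := hfg w hiw hwn
  refine le_sup_of_le (b := w) ?_ (EReal.coe_le_coe_iff.mpr (by linarith))
  simp only [mem_filter, mem_Ioc]
  exact ⟨⟨hiw, hwn⟩, by linarith⟩

lemma feasibleSup_le_max_succ {n : ℕ} {r τ f : ℕ → ℝ} {i : ℕ}
    (hτ0 : 0 ≤ τ i) (hτ : τ (i + 1) ≤ τ i) :
    feasibleSup n r τ f i ≤ max (f (i + 1) : EReal) (feasibleSup n r τ f (i + 1)) := by
  refine Finset.sup_le fun w hw => ?_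
  simp only [mem_filter, mem_Ioc] at hw
  obtain ⟨⟨hiw, hwn⟩, hfeas⟩ := hw
  rcases (Nat.succ_le_of_lt hiw).eq_or_lt with rfl | hlt
  · exact le_max_of_le_left (EReal.coe_le_coe_iff.mpr (by linarith))
  · refine le_max_of_le_right (le_sup_of_le (b := w) ?_
      (EReal.coe_le_coe_iff.mpr (by linarith)))
    simp only [mem_filter, mem_Ioc]
    exact ⟨⟨hlt, hwn⟩, by linarith⟩

lemma feasibleSup_eq_bot {n : ℕ} {r τ f : ℕ → ℝ} {i : ℕ} (hi : n + 1 ≤ i) :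
    feasibleSup n r τ f i = ⊥ := by
  simp [feasibleSup, Ioc_eq_empty_of_le hi]

def IsDistanceRecurrence (nl nr : ℕ) (rl rr τl τr : ℕ → ℝ) (lam : ℕ → ℕ → ℝ) : Prop :=
  ∀ i j, 1 ≤ i → i ≤ nl + 1 → 1 ≤ j → j ≤ nr + 1 → (i, j) ≠ (nl + 1, nr + 1) →
    (lam i j : EReal) =
      max (feasibleSup nl rl τl (lam · j) i) (feasibleSup nr rr τr (lam i ·) j)

namespace IsDistanceRecurrence

variable {nl nr : ℕ} {rl rr τl τr : ℕ → ℝ} {lam : ℕ → ℕ → ℝ}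

lemma swap (h : IsDistanceRecurrence nl nr rl rr τl τr lam) :
    IsDistanceRecurrence nr nl rr rl τr τl (fun j i => lam i j) := by
  intro j i hj1 hj hi1 hi hji
  rw [max_comm]
  exact h i j hi1 hi hj1 hj fun hij => hji (by simp_all)

lemma max_feasibleSup_le (h : IsDistanceRecurrence nl nr rl rr τl τr lam)
    {i j : ℕ} (hi1 : 1 ≤ i) (hi : i ≤ nl + 1) (hj1 : 1 ≤ j) (hj : j ≤ nr + 1) :
    max (feasibleSup nl rl τl (lam · j) i) (feasibleSup nr rr τr (lam i ·) j) ≤ lam i j := by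
  by_cases hcorner : (i, j) = (nl + 1, nr + 1)
  · simp only [Prod.mk.injEq] at hcorner
    simp [feasibleSup_eq_bot, hcorner.1, hcorner.2]
  · exact (h i j hi1 hi hj1 hj hcorner).ge

lemma le_succ_left (h : IsDistanceRecurrence nl nr rl rr τl τr lam)
    (hτ0 : ∀ i, 0 ≤ τl i) (hτ : ∀ i, τl (i + 1) ≤ τl i)
    {i : ℕ} (hi1 : 1 ≤ i) (hi : i ≤ nl) :
    ∀ j, 1 ≤ j → j ≤ nr + 1 → lam i j ≤ lam (i + 1) j := by
  intro j
  induction hk : nr + 1 - j using Nat.strong_induction_on generalizing j with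
  | _ k ih =>
    intro hj1 hj
    have hrec_i := h i j hi1 (by omega) hj1 hj (by simp; omega)
    have hsucc := h.max_feasibleSup_le (i := i + 1) (by omega) (by omega) hj1 hj
    have hleft : feasibleSup nl rl τl (lam · j) i ≤ lam (i + 1) j :=
      (feasibleSup_le_max_succ (hτ0 i) (hτ i)).trans
        (max_le le_rfl ((le_max_left _ _).trans hsucc))
    have hright : feasibleSup nr rr τr (lam i ·) j ≤ lam (i + 1) j :=
      (feasibleSup_mono fun w hjw hw => ih (nr + 1 - w) (by omega) w rfl (by omega) hw).trans
        ((le_max_right _ _).trans hsucc)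
    exact EReal.coe_le_coe_iff.mp (hrec_i ▸ max_le hleft hright)

end IsDistanceRecurrence

theorem stmt_18_general (nl nr : ℕ)
    (rl rr τl τr : ℕ → ℝ) (lam : ℕ → ℕ → ℝ)
    (hτl0 : ∀ i, 0 ≤ τl i) (hτr0 : ∀ i, 0 ≤ τr i)
    (hτlmono : ∀ i, τl (i + 1) ≤ τl i) (hτrmono : ∀ i, τr (i + 1) ≤ τr i)
    (hrec : ∀ i j, 1 ≤ i → i ≤ nl + 1 → 1 ≤ j → j ≤ nr + 1 →
      (i, j) ≠ (nl + 1, nr + 1) →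
      (lam i j : EReal) =
        max
          (((Finset.Ioc i (nl + 1)).filter
              (fun w => rl (w - 1) ≤ lam w j - 2 * τl i)).sup
            (fun w => ((lam w j - 2 * τl i : ℝ) : EReal)))
          (((Finset.Ioc j (nr + 1)).filter
              (fun w => rr (w - 1) ≤ lam i w - 2 * τr j)).sup
            (fun w => ((lam i w - 2 * τr j : ℝ) : EReal)))) :
    (∀ i j, 1 ≤ i → i ≤ nl → 1 ≤ j → j ≤ nr + 1 → lam i j ≤ lam (i + 1) j) ∧
    (∀ i j, 1 ≤ i → i ≤ nl + 1 → 1 ≤ j → j ≤ nr → lam i j ≤ lam i (j + 1)) := by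
  have h : IsDistanceRecurrence nl nr rl rr τl τr lam := hrec
  exact ⟨fun i j hi1 hi => h.le_succ_left hτl0 hτlmono hi1 hi j,
    fun i j hi1 hi hj1 hj => h.swap.le_succ_left hτr0 hτrmono hj1 hj i hi1 hi⟩

/-- the two-sided distance recurrence
`λ(i,j) = max (L(i,j), R(i,j))` with base `λ(n_l+1, n_r+1) = D`
(`L`, `R` computed as `EReal` suprema over the feasible sets, which are
automatically empty—hence omitted—when `i = n_l+1` resp. `j = n_r+1`)
is non-decreasing in each coordinate. -/
theorem stmt_18 (nl nr : ℕ) (hnl : 1 ≤ nl) (hnr : 1 ≤ nr) (D : ℝ)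
    (rl rr τl τr : ℕ → ℝ) (lam : ℕ → ℕ → ℝ)
    (hτl0 : ∀ i, 0 ≤ τl i) (hτr0 : ∀ i, 0 ≤ τr i)
    (hτlmono : ∀ i, τl (i + 1) ≤ τl i) (hτrmono : ∀ i, τr (i + 1) ≤ τr i)
    (hbase : lam (nl + 1) (nr + 1) = D)
    (hne : ∀ i j, 1 ≤ i → i ≤ nl + 1 → 1 ≤ j → j ≤ nr + 1 →
      (i, j) ≠ (nl + 1, nr + 1) →
      ((Finset.Ioc i (nl + 1)).filter
          (fun w => rl (w - 1) ≤ lam w j - 2 * τl i)).Nonempty ∨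
      ((Finset.Ioc j (nr + 1)).filter
          (fun w => rr (w - 1) ≤ lam i w - 2 * τr j)).Nonempty)
    (hrec : ∀ i j, 1 ≤ i → i ≤ nl + 1 → 1 ≤ j → j ≤ nr + 1 →
      (i, j) ≠ (nl + 1, nr + 1) →
      (lam i j : EReal) =
        max
          (((Finset.Ioc i (nl + 1)).filter
              (fun w => rl (w - 1) ≤ lam w j - 2 * τl i)).sup
            (fun w => ((lam w j - 2 * τl i : ℝ) : EReal)))
          (((Finset.Ioc j (nr + 1)).filter
              (fun w => rr (w - 1) ≤ lam i w - 2 * τr j)).sup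
            (fun w => ((lam i w - 2 * τr j : ℝ) : EReal)))) :
    (∀ i j, 1 ≤ i → i ≤ nl → 1 ≤ j → j ≤ nr + 1 → lam i j ≤ lam (i + 1) j) ∧
    (∀ i j, 1 ≤ i → i ≤ nl + 1 → 1 ≤ j → j ≤ nr → lam i j ≤ lam i (j + 1)) :=
  stmt_18_general nl nr rl rr τl τr lam hτl0 hτr0 hτlmono hτrmono hrec
end
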